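/- arXiv:0809.3015 — 4 statements merged into one kernel-verified Lean document; each statement's English description precedes it below -/
import Mathlib

section
/- Let P and Q be 3×3 complex matrices with P² = Q² = 0 and Tr(PQ) = ω ≠ 0. Then there exists an invertible 3×3 complex matrix g such that g⁻¹Pg has a 1 in the (1,3) entry and zeros elsewhere, and g⁻¹Qg has ω in the (3,1) entry and zeros elsewhere. -/
/-!
A square-zero `3 × 3` matrix has rank at most one, so `P = u vᵀ` and `Q = x yᵀ` with
`v ⬝ u = 0 = y ⬝ x`, and `Tr (P Q) = (v ⬝ x) (y ⬝ u) = ω`. In the basis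
`(v ⬝ x) u, v × y, x` the matrix `P` sends the third vector to the first and kills the
other two, while `Q` sends the first vector to `ω` times the third and kills the other two.
These vectors form a basis because, by the Binet–Cauchy identity, their determinant is
`(v ⬝ x) ω ≠ 0`.
-/

open Matrix

namespace Matrix

variable {K : Type*} [Field K] {m n : Type*} [Fintype n]

theorem exists_eq_vecMulVec_of_rank_le_one [Fintype m] {A : Matrix m n K} (hA : A.rank ≤ 1) :
    ∃ (u : m → K) (v : n → K), A = vecMulVec u v := by
  rw [rank_eq_finrank_span_cols] at hA
  obtain ⟨u, hu⟩ := ((Submodule.finrank_le_one_iff_isPrincipal _).mp hA).principal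
  have hcol : ∀ j, ∃ c : K, c • u = A.col j := fun j =>
    Submodule.mem_span_singleton.mp (hu ▸ Submodule.subset_span ⟨j, rfl⟩)
  choose v hv using hcol
  refine ⟨u, v, ext fun i j => ?_⟩
  simpa [vecMulVec_apply, mul_comm] using (congrFun (hv j) i).symm

theorem rank_le_one_of_mul_self_eq_zero {A : Matrix n n K} (hn : Fintype.card n ≤ 3)
    (hA : A * A = 0) : A.rank ≤ 1 := by
  have := rank_add_rank_le_card_of_mul_eq_zero hA
  omega

theorem dotProduct_eq_zero_of_vecMulVec_mul_self_eq_zero {u v : n → K} (hu : u ≠ 0)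
    (hv : v ≠ 0) (h : vecMulVec u v * vecMulVec u v = 0) : v ⬝ᵥ u = 0 := by
  rw [vecMulVec_mul_vecMulVec, vecMulVec_eq_zero] at h
  simpa [hu, hv] using h

theorem trace_vecMulVec_mul_vecMulVec (u v x y : n → K) :
    trace (vecMulVec u v * vecMulVec x y) = (v ⬝ᵥ x) * (y ⬝ᵥ u) := by
  rw [vecMulVec_mul_vecMulVec, trace_vecMulVec, dotProduct_smul, smul_eq_mul, dotProduct_comm u y]

theorem inv_mul_mul_eq_of_mulVec_cols [DecidableEq n] {A B : Matrix n n K} {c : n → n → K}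
    (hc : IsUnit (of c).det) (h : ∀ j, A *ᵥ c j = ∑ i, B i j • c i) :
    ((of c)ᵀ)⁻¹ * A * (of c)ᵀ = B := by
  have : Invertible (of c)ᵀ := invertibleOfIsUnitDet _ (by rwa [det_transpose])
  rw [Matrix.mul_assoc, inv_mul_eq_iff_eq_mul_of_invertible]
  ext i j
  simpa [mul_apply, mulVec, dotProduct, Finset.sum_apply, mul_comm] using congrFun (h j) i

end Matrix

section NormalForm

variable {K : Type*} [Field K] (u v x y : Fin 3 → K)

/-- For `P = vecMulVec u v` and `Q = vecMulVec x y`, the vectors span `im P`, `ker P ∩ ker Q`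
and `im Q` respectively. -/
def normalFrame : Fin 3 → Fin 3 → K :=
  ![(v ⬝ᵥ x) • u, v ⨯₃ y, x]

variable {u v x y} {ω : K}

theorem det_normalFrame (hvu : v ⬝ᵥ u = 0) (hyx : y ⬝ᵥ x = 0)
    (hω : (v ⬝ᵥ x) * (y ⬝ᵥ u) = ω) :
    (of (normalFrame u v x y)).det = (v ⬝ᵥ x) * ω :=
  calc (of (normalFrame u v x y)).det = ((v ⬝ᵥ x) • u) ⬝ᵥ v ⨯₃ y ⨯₃ x :=
        (triple_product_eq_det _ _ _).symm
    _ = (v ⬝ᵥ x) * ω := by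
      rw [triple_product_permutation, map_smul, dotProduct_smul, cross_dot_cross, hvu, hyx, hω]
      simp

theorem exists_conj_vecMulVec_eq (hvu : v ⬝ᵥ u = 0) (hyx : y ⬝ᵥ x = 0)
    (hω : (v ⬝ᵥ x) * (y ⬝ᵥ u) = ω) (hω0 : ω ≠ 0) :
    ∃ g : Matrix (Fin 3) (Fin 3) K, IsUnit g ∧
      g⁻¹ * vecMulVec u v * g = !![0, 0, 1; 0, 0, 0; 0, 0, 0] ∧
      g⁻¹ * vecMulVec x y * g = !![0, 0, 0; 0, 0, 0; ω, 0, 0] := by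
  have hdet : IsUnit (of (normalFrame u v x y)).det := by
    rw [det_normalFrame hvu hyx hω, isUnit_iff_ne_zero]
    exact mul_ne_zero (left_ne_zero_of_mul (hω ▸ hω0)) hω0
  refine ⟨(of (normalFrame u v x y))ᵀ, ?_, inv_mul_mul_eq_of_mulVec_cols hdet ?_,
    inv_mul_mul_eq_of_mulVec_cols hdet ?_⟩
  · rwa [isUnit_iff_isUnit_det, det_transpose]
  · intro j
    fin_cases j <;> simp [normalFrame, vecMulVec_mulVec, Fin.sum_univ_three, hvu, dot_self_cross]
  · intro j
    fin_cases j <;> simp [normalFrame, vecMulVec_mulVec, Fin.sum_univ_three, hyx, dot_cross_self,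
      ← hω, mul_smul, smul_comm (y ⬝ᵥ u)]

end NormalForm

/-- If `P, Q` are 3×3 complex matrices with `P² = Q² = 0` and
`Tr(PQ) = ω ≠ 0`, then there is an invertible `g` conjugating `P` to the matrix
with a single `1` in the (1,3) entry and `Q` to the matrix with single entry `ω`
in the (3,1) entry. -/
theorem stmt0 (P Q : Matrix (Fin 3) (Fin 3) ℂ) (ω : ℂ)
    (hP : P * P = 0) (hQ : Q * Q = 0)
    (hω : (P * Q).trace = ω) (hω0 : ω ≠ 0) :
    ∃ g : Matrix (Fin 3) (Fin 3) ℂ, IsUnit g ∧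
      g⁻¹ * P * g = !![0, 0, 1; 0, 0, 0; 0, 0, 0] ∧
      g⁻¹ * Q * g = !![0, 0, 0; 0, 0, 0; ω, 0, 0] := by
  obtain ⟨u, v, rfl⟩ := exists_eq_vecMulVec_of_rank_le_one
    (rank_le_one_of_mul_self_eq_zero (by simp) hP)
  obtain ⟨x, y, rfl⟩ := exists_eq_vecMulVec_of_rank_le_one
    (rank_le_one_of_mul_self_eq_zero (by simp) hQ)
  rw [trace_vecMulVec_mul_vecMulVec] at hω
  obtain ⟨hvx, hyu⟩ := mul_ne_zero_iff.mp (hω ▸ hω0)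
  have hu : u ≠ 0 := by rintro rfl; simp at hyu
  have hv : v ≠ 0 := by rintro rfl; simp at hvx
  have hx : x ≠ 0 := by rintro rfl; simp at hvx
  have hy : y ≠ 0 := by rintro rfl; simp at hyu
  exact exists_conj_vecMulVec_eq (dotProduct_eq_zero_of_vecMulVec_mul_self_eq_zero hu hv hP)
    (dotProduct_eq_zero_of_vecMulVec_mul_self_eq_zero hx hy hQ) hω hω0
end

section
/- If P and Q are 3×3 complex matrices with P² = Q² = 0 and Tr(PQ) ≠ 0, then the kernel of QP equals the kernel of P, and the image of QP equals the image of Q (as linear maps on ℂ³). -/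
open Matrix Module

/-- A square matrix whose associated linear map is zero is the zero matrix. -/
lemma aux_mulVecLin_ne_zero {A : Matrix (Fin 3) (Fin 3) ℂ} (hA : A ≠ 0) :
    A.mulVecLin ≠ 0 := by
  intro h
  apply hA
  ext i j
  have := congrFun (congrArg (fun f => f (Pi.single j 1)) (congrArg DFunLike.coe h)) i
  simpa [Matrix.mulVecLin_apply, Matrix.mulVec_single_one] using this

/-- If `A² = 0` and `A ≠ 0` for a 3×3 complex matrix, the range of `A` has dimension 1. -/
lemma aux_rank_one {A : Matrix (Fin 3) (Fin 3) ℂ} (h2 : A * A = 0) (hA : A ≠ 0) :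
    finrank ℂ (LinearMap.range A.mulVecLin) = 1 ∧
    finrank ℂ (LinearMap.ker A.mulVecLin) = 2 := by
  set f := A.mulVecLin with hf
  have hr : LinearMap.range f ≤ LinearMap.ker f := by
    rintro x ⟨y, rfl⟩
    show f (f y) = 0
    rw [hf, ← LinearMap.comp_apply, ← Matrix.mulVecLin_mul, h2, Matrix.mulVecLin_zero,
      LinearMap.zero_apply]
  have hrk := LinearMap.finrank_range_add_finrank_ker f
  rw [Module.finrank_fin_fun] at hrk
  have hle : finrank ℂ (LinearMap.range f) ≤ finrank ℂ (LinearMap.ker f) :=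
    Submodule.finrank_mono hr
  have hne : LinearMap.range f ≠ ⊥ :=
    fun h => aux_mulVecLin_ne_zero hA (LinearMap.range_eq_bot.mp h)
  have h1 : finrank ℂ (LinearMap.range f) ≠ 0 :=
    fun h => hne (Submodule.finrank_eq_zero.mp h)
  omega

/-- If `P, Q` are 3×3 complex matrices with `P² = Q² = 0` and
`Tr(PQ) ≠ 0`, then `ker(QP) = ker(P)` and `im(QP) = im(Q)` as linear maps on ℂ³. -/
theorem stmt1 (P Q : Matrix (Fin 3) (Fin 3) ℂ)
    (hP : P * P = 0) (hQ : Q * Q = 0) (hω : (P * Q).trace ≠ 0) :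
    LinearMap.ker (Q * P).mulVecLin = LinearMap.ker P.mulVecLin ∧
    LinearMap.range (Q * P).mulVecLin = LinearMap.range Q.mulVecLin := by
  have hQP : Q * P ≠ 0 := by
    intro h
    apply hω
    rw [Matrix.trace_mul_comm, h, Matrix.trace_zero]
  have hPne : P ≠ 0 := by
    intro h; apply hω; rw [h, zero_mul, Matrix.trace_zero]
  have hQne : Q ≠ 0 := by
    intro h; apply hω; rw [h, mul_zero, Matrix.trace_zero]
  obtain ⟨hPr, hPk⟩ := aux_rank_one hP hPne
  obtain ⟨hQr, hQk⟩ := aux_rank_one hQ hQne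
  -- dimensions of QP
  have hrk := LinearMap.finrank_range_add_finrank_ker (Q * P).mulVecLin
  rw [Module.finrank_fin_fun] at hrk
  have hQPr : finrank ℂ (LinearMap.range (Q * P).mulVecLin) ≠ 0 :=
    fun h => aux_mulVecLin_ne_zero hQP
      (LinearMap.range_eq_bot.mp (Submodule.finrank_eq_zero.mp h))
  -- inclusions
  have hker_le : LinearMap.ker P.mulVecLin ≤ LinearMap.ker (Q * P).mulVecLin := by
    intro x hx
    rw [LinearMap.mem_ker] at hx ⊢
    rw [Matrix.mulVecLin_mul, LinearMap.comp_apply, hx, map_zero]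
  have hrange_le : LinearMap.range (Q * P).mulVecLin ≤ LinearMap.range Q.mulVecLin := by
    rintro x ⟨y, rfl⟩
    rw [Matrix.mulVecLin_mul]
    exact ⟨P.mulVecLin y, rfl⟩
  constructor
  · exact (Submodule.eq_of_le_of_finrank_le hker_le (by omega)).symm
  · exact Submodule.eq_of_le_of_finrank_le hrange_le (by omega)
end

section
/- Let ψ : Ω → ℝ solve ψ_{zz̄} + (1/2)e^ψ + |U|²e^{−2ψ} = 0 on an open set Ω ⊆ ℂ, where U : Ω → ℂ is holomorphic and nonvanishing. Define ξ by dξ = 2^{−1/3}U^{1/3}dz (a local holomorphic coordinate change) and ψ̂ = ψ − (1/3)log U − (1/3)log Ū − (1/3)log 2. Then ψ̂, as a function of ξ and ξ̄, satisfies ψ̂_{ξξ̄} + e^{ψ̂} + e^{−2ψ̂} = 0. -/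
/-- Wirtinger derivative `∂/∂z` of a function `f : ℂ → ℂ` (real-differentiable). -/
noncomputable def wdz (f : ℂ → ℂ) (z : ℂ) : ℂ :=
  (1 / 2) * (fderiv ℝ f z 1 - Complex.I * fderiv ℝ f z Complex.I)

/-- Wirtinger derivative `∂/∂z̄`. -/
noncomputable def wdzb (f : ℂ → ℂ) (z : ℂ) : ℂ :=
  (1 / 2) * (fderiv ℝ f z 1 + Complex.I * fderiv ℝ f z Complex.I)

section Helpers

open Complex

lemma fderiv_apply_wd (f : ℂ → ℂ) (z : ℂ) (v : ℂ) :
    fderiv ℝ f z v = wdz f z * v + wdzb f z * (starRingEnd ℂ) v := by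
  obtain ⟨a, b, hv⟩ : ∃ a b : ℝ, v = (a : ℂ) + (b : ℂ) * Complex.I :=
    ⟨v.re, v.im, (Complex.re_add_im v).symm⟩
  subst hv
  have hconj : (starRingEnd ℂ) ((a : ℂ) + (b : ℂ) * Complex.I)
      = (a : ℂ) - (b : ℂ) * Complex.I := by
    apply Complex.ext <;> simp
  have hsm : ((a : ℂ) + (b : ℂ) * Complex.I) = a • (1 : ℂ) + b • Complex.I := by
    simp [Complex.real_smul]
  rw [hconj]
  conv_lhs => rw [hsm]
  rw [map_add, (fderiv ℝ f z).map_smul, (fderiv ℝ f z).map_smul]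
  simp only [wdz, wdzb, Complex.real_smul, smul_eq_mul]
  linear_combination ((b : ℂ) * fderiv ℝ f z Complex.I) * Complex.I_sq

lemma hasDerivAt_fderiv {f : ℂ → ℂ} {d z : ℂ} (h : HasDerivAt f d z) (v : ℂ) :
    fderiv ℝ f z v = d * v := by
  have h' : HasFDerivAt f (((ContinuousLinearMap.id ℂ ℂ).smulRight d).restrictScalars ℝ) z :=
    (h.hasFDerivAt).restrictScalars ℝ
  rw [h'.fderiv]
  simp [mul_comm]

lemma wdz_holo {f : ℂ → ℂ} {d z : ℂ} (h : HasDerivAt f d z) : wdz f z = d := by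
  simp only [wdz, hasDerivAt_fderiv h]
  linear_combination (-(1:ℂ)/2 * d) * Complex.I_sq

lemma wdzb_holo {f : ℂ → ℂ} {d z : ℂ} (h : HasDerivAt f d z) : wdzb f z = 0 := by
  simp only [wdzb, hasDerivAt_fderiv h]
  linear_combination ((1:ℂ)/2 * d) * Complex.I_sq

lemma wdz_conj_holo {f : ℂ → ℂ} {d z : ℂ} (h : HasDerivAt f d z) :
    wdz (fun w => (starRingEnd ℂ) (f w)) z = 0 := by
  have hdf : DifferentiableAt ℝ f z := (h.differentiableAt).restrictScalars ℝ
  have hfd : HasFDerivAt (fun w => (starRingEnd ℂ) (f w))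
      (Complex.conjCLE.toContinuousLinearMap.comp (fderiv ℝ f z)) z :=
    Complex.conjCLE.toContinuousLinearMap.hasFDerivAt.comp z hdf.hasFDerivAt
  simp only [wdz, hfd.fderiv, ContinuousLinearMap.coe_comp', Function.comp_apply,
    ContinuousLinearEquiv.coe_coe, Complex.conjCLE_apply, hasDerivAt_fderiv h, map_mul,
    map_one, Complex.conj_I]
  linear_combination ((starRingEnd ℂ) d / 2) * Complex.I_sq

-- differentiability of wdz/wdzb from smoothness
lemma wdz_eq_fun (f : ℂ → ℂ) : wdz f = fun z =>
    (1 / 2 : ℂ) * ((fun w => fderiv ℝ f w) z 1 - Complex.I * (fun w => fderiv ℝ f w) z Complex.I) := rfl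

lemma contDiffAt_wdz {f : ℂ → ℂ} {z : ℂ} (hf : ContDiffAt ℝ (⊤ : ℕ∞) f z) :
    ContDiffAt ℝ (⊤ : ℕ∞) (wdz f) z := by
  have hfd : ContDiffAt ℝ (⊤ : ℕ∞) (fderiv ℝ f) z := hf.fderiv_right (by simp)
  have h1 : ContDiffAt ℝ (⊤ : ℕ∞) (fun w => fderiv ℝ f w 1) z := hfd.clm_apply contDiffAt_const
  have h2 : ContDiffAt ℝ (⊤ : ℕ∞) (fun w => fderiv ℝ f w Complex.I) z := hfd.clm_apply contDiffAt_const
  exact contDiffAt_const.mul (h1.sub (contDiffAt_const.mul h2))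

lemma contDiffAt_wdzb {f : ℂ → ℂ} {z : ℂ} (hf : ContDiffAt ℝ (⊤ : ℕ∞) f z) :
    ContDiffAt ℝ (⊤ : ℕ∞) (wdzb f) z := by
  have hfd : ContDiffAt ℝ (⊤ : ℕ∞) (fderiv ℝ f) z := hf.fderiv_right (by simp)
  have h1 : ContDiffAt ℝ (⊤ : ℕ∞) (fun w => fderiv ℝ f w 1) z := hfd.clm_apply contDiffAt_const
  have h2 : ContDiffAt ℝ (⊤ : ℕ∞) (fun w => fderiv ℝ f w Complex.I) z := hfd.clm_apply contDiffAt_const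
  exact contDiffAt_const.mul (h1.add (contDiffAt_const.mul h2))

lemma wdz_congr {f g : ℂ → ℂ} {z : ℂ} (h : f =ᶠ[nhds z] g) : wdz f z = wdz g z := by
  simp only [wdz, h.fderiv_eq]

lemma wdzb_congr {f g : ℂ → ℂ} {z : ℂ} (h : f =ᶠ[nhds z] g) : wdzb f z = wdzb g z := by
  simp only [wdzb, h.fderiv_eq]

lemma wd_comp {g ξ : ℂ → ℂ} {c z : ℂ} (hξ : HasDerivAt ξ c z)
    (hg : DifferentiableAt ℝ g (ξ z)) :
    wdz (fun w => g (ξ w)) z = c * wdz g (ξ z) ∧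
    wdzb (fun w => g (ξ w)) z = (starRingEnd ℂ) c * wdzb g (ξ z) := by
  have hdξ : DifferentiableAt ℝ ξ z := (hξ.differentiableAt).restrictScalars ℝ
  have hcomp : fderiv ℝ (fun w => g (ξ w)) z = (fderiv ℝ g (ξ z)).comp (fderiv ℝ ξ z) :=
    fderiv_comp (x := z) hg hdξ
  have hξv : ∀ v, fderiv ℝ ξ z v = c * v := fun v => hasDerivAt_fderiv hξ v
  have key : ∀ v, fderiv ℝ (fun w => g (ξ w)) z v
      = wdz g (ξ z) * (c * v) + wdzb g (ξ z) * (starRingEnd ℂ) (c * v) := by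
    intro v
    rw [hcomp]
    simp only [ContinuousLinearMap.coe_comp', Function.comp_apply, hξv]
    exact fderiv_apply_wd g (ξ z) (c * v)
  have e1 := key 1
  have eI := key Complex.I
  simp only [mul_one, map_mul, Complex.conj_I, map_one] at e1 eI
  set α := wdz g (ξ z) with hα
  set β := wdzb g (ξ z) with hβ
  constructor
  · show (1/2 : ℂ) * (fderiv ℝ (fun w => g (ξ w)) z 1
      - Complex.I * fderiv ℝ (fun w => g (ξ w)) z Complex.I) = c * α
    rw [e1, eI]
    linear_combination ((β * (starRingEnd ℂ) c - α * c)/2) * Complex.I_sq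
  · show (1/2 : ℂ) * (fderiv ℝ (fun w => g (ξ w)) z 1
      + Complex.I * fderiv ℝ (fun w => g (ξ w)) z Complex.I) = (starRingEnd ℂ) c * β
    rw [e1, eI]
    linear_combination ((α * c - β * (starRingEnd ℂ) c)/2) * Complex.I_sq

lemma wdzb_mul {u v : ℂ → ℂ} {z : ℂ} (hu : DifferentiableAt ℝ u z)
    (hv : DifferentiableAt ℝ v z) :
    wdzb (fun w => u w * v w) z = u z * wdzb v z + v z * wdzb u z := by
  have h := fderiv_fun_mul hu hv
  simp only [wdzb, h, ContinuousLinearMap.add_apply, ContinuousLinearMap.smul_apply,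
    smul_eq_mul]
  ring

lemma wdzb_sub {u v : ℂ → ℂ} {z : ℂ} (hu : DifferentiableAt ℝ u z)
    (hv : DifferentiableAt ℝ v z) :
    wdzb (fun w => u w - v w) z = wdzb u z - wdzb v z := by
  simp only [wdzb, fderiv_fun_sub hu hv, ContinuousLinearMap.sub_apply]
  ring

lemma wdz_sub {u v : ℂ → ℂ} {z : ℂ} (hu : DifferentiableAt ℝ u z)
    (hv : DifferentiableAt ℝ v z) :
    wdz (fun w => u w - v w) z = wdz u z - wdz v z := by
  simp only [wdz, fderiv_fun_sub hu hv, ContinuousLinearMap.sub_apply]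
  ring

lemma wdz_const_mul {v : ℂ → ℂ} {z : ℂ} (a : ℂ) (hv : DifferentiableAt ℝ v z) :
    wdz (fun w => a * v w) z = a * wdz v z := by
  have h : fderiv ℝ (fun w => a * v w) z = a • fderiv ℝ v z := by
    have := (hv.hasFDerivAt.const_smul a)
    simpa [smul_eq_mul, Pi.smul_def] using this.fderiv
  simp only [wdz, h, ContinuousLinearMap.smul_apply, smul_eq_mul]
  ring

lemma wdzb_const_mul {v : ℂ → ℂ} {z : ℂ} (a : ℂ) (hv : DifferentiableAt ℝ v z) :
    wdzb (fun w => a * v w) z = a * wdzb v z := by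
  have h : fderiv ℝ (fun w => a * v w) z = a • fderiv ℝ v z := by
    have := (hv.hasFDerivAt.const_smul a)
    simpa [smul_eq_mul, Pi.smul_def] using this.fderiv
  simp only [wdzb, h, ContinuousLinearMap.smul_apply, smul_eq_mul]
  ring

lemma wdz_const (a z : ℂ) : wdz (fun _ => a) z = 0 := by
  simp [wdz, fderiv_const]

lemma wdzb_const (a z : ℂ) : wdzb (fun _ => a) z = 0 := by
  simp [wdzb, fderiv_const]

lemma wdz_add {u v : ℂ → ℂ} {z : ℂ} (hu : DifferentiableAt ℝ u z)
    (hv : DifferentiableAt ℝ v z) :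
    wdz (fun w => u w + v w) z = wdz u z + wdz v z := by
  simp only [wdz, fderiv_fun_add hu hv, ContinuousLinearMap.add_apply]
  ring

lemma wdzb_add {u v : ℂ → ℂ} {z : ℂ} (hu : DifferentiableAt ℝ u z)
    (hv : DifferentiableAt ℝ v z) :
    wdzb (fun w => u w + v w) z = wdzb u z + wdzb v z := by
  simp only [wdzb, fderiv_fun_add hu hv, ContinuousLinearMap.add_apply]
  ring

end Helpers

/-- If `ψ` solves `ψ_{zz̄} + (1/2)e^ψ + |U|²e^{−2ψ} = 0` on `Ω`
with `U` holomorphic nonvanishing, `ξ` the coordinate with `dξ = 2^{-1/3}U^{1/3}dz`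
(with `C` a holomorphic cube root of `U` and `L` a holomorphic logarithm of `U`),
and `ψ̂ ∘ ξ = ψ − (1/3)log U − (1/3)log Ū − (1/3)log 2`, then `ψ̂` satisfies
`ψ̂_{ξξ̄} + e^{ψ̂} + e^{−2ψ̂} = 0`. -/
theorem stmt8 (Ω : Set ℂ) (hΩ : IsOpen Ω)
    (ψ : ℂ → ℝ) (hψ : ContDiffOn ℝ (⊤ : ℕ∞) (fun z => (ψ z : ℂ)) Ω)
    (U L C ξ : ℂ → ℂ)
    (hU : DifferentiableOn ℂ U Ω) (hU0 : ∀ z ∈ Ω, U z ≠ 0)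
    (hL : DifferentiableOn ℂ L Ω) (hLU : ∀ z ∈ Ω, Complex.exp (L z) = U z)
    (hC : DifferentiableOn ℂ C Ω) (hCU : ∀ z ∈ Ω, (C z) ^ 3 = U z)
    (hξ : DifferentiableOn ℂ ξ Ω)
    (hξ' : ∀ z ∈ Ω, deriv ξ z = (2 : ℂ) ^ (-(1 / 3 : ℂ)) * C z)
    (hinj : Set.InjOn ξ Ω)
    (hpde : ∀ z ∈ Ω, wdzb (wdz fun w => (ψ w : ℂ)) z
      + (1 / 2) * Complex.exp (ψ z)
      + ((‖U z‖ : ℝ) : ℂ) ^ 2 * Complex.exp (-2 * ψ z) = 0)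
    (ψh : ℂ → ℝ) (hψh : ContDiffOn ℝ (⊤ : ℕ∞) (fun w => (ψh w : ℂ)) (ξ '' Ω))
    (hrel : ∀ z ∈ Ω, (ψh (ξ z) : ℂ) =
      (ψ z : ℂ) - (1 / 3) * (L z + (starRingEnd ℂ) (L z)) - (1 / 3) * Real.log 2) :
    ∀ z ∈ Ω, wdzb (wdz fun w => (ψh w : ℂ)) (ξ z)
      + Complex.exp (ψh (ξ z)) + Complex.exp (-2 * ψh (ξ z)) = 0 := by

  intro z hz
  have hΩn : Ω ∈ nhds z := hΩ.mem_nhds hz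
  set g : ℂ → ℂ := fun w => (ψh w : ℂ) with hgdef
  set ψc : ℂ → ℂ := fun w => (ψ w : ℂ) with hψcdef
  -- nonvanishing derivative
  have hC0 : ∀ x ∈ Ω, C x ≠ 0 := by
    intro x hx h
    exact hU0 x hx (by rw [← hCU x hx, h]; ring)
  have h20 : ((2 : ℂ) ^ (-(1 / 3 : ℂ))) ≠ 0 := by
    simp [Complex.cpow_eq_zero_iff]
  have hc0 : ∀ x ∈ Ω, deriv ξ x ≠ 0 := by
    intro x hx
    rw [hξ' x hx]
    exact mul_ne_zero h20 (hC0 x hx)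
  -- image is a neighborhood
  have himg : ∀ x ∈ Ω, ξ '' Ω ∈ nhds (ξ x) := by
    intro x hx
    have hξa : AnalyticAt ℂ ξ x := hξ.analyticAt (hΩ.mem_nhds hx)
    have hcd : ContDiffAt ℂ ⊤ ξ x := hξa.contDiffAt
    have hstrict : HasStrictDerivAt ξ (deriv ξ x) x := hcd.hasStrictDerivAt (by simp)
    rw [← hstrict.map_nhds_eq (hc0 x hx)]
    exact Filter.image_mem_map (hΩ.mem_nhds hx)
  have hgsmooth : ∀ x ∈ Ω, ContDiffAt ℝ (⊤ : ℕ∞) g (ξ x) := fun x hx => hψh.contDiffAt (himg x hx)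
  have hψs : ∀ x ∈ Ω, ContDiffAt ℝ (⊤ : ℕ∞) ψc x := fun x hx => hψ.contDiffAt (hΩ.mem_nhds hx)
  have hξdiff : ∀ x ∈ Ω, DifferentiableAt ℂ ξ x := fun x hx => hξ.differentiableAt (hΩ.mem_nhds hx)
  -- Step A : chain rule
  have hstepA : wdzb (wdz (fun w => g (ξ w))) z
      = deriv ξ z * (starRingEnd ℂ) (deriv ξ z) * wdzb (wdz g) (ξ z) := by
    have heq : wdz (fun w => g (ξ w)) =ᶠ[nhds z] fun x => deriv ξ x * wdz g (ξ x) := by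
      filter_upwards [hΩn] with x hx
      exact (wd_comp ((hξdiff x hx).hasDerivAt) ((hgsmooth x hx).differentiableAt (by simp))).1
    rw [wdzb_congr heq]
    have hdξa : AnalyticAt ℂ (deriv ξ) z := (hξ.analyticOnNhd hΩ).deriv z hz
    have hdξd : HasDerivAt (deriv ξ) (deriv (deriv ξ) z) z := hdξa.differentiableAt.hasDerivAt
    have hu : DifferentiableAt ℝ (deriv ξ) z := hdξd.differentiableAt.restrictScalars ℝ
    have hwdzg : DifferentiableAt ℝ (wdz g) (ξ z) :=
      (contDiffAt_wdz (hgsmooth z hz)).differentiableAt (by simp)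
    have hv : DifferentiableAt ℝ (fun x => wdz g (ξ x)) z :=
      hwdzg.comp z ((hξdiff z hz).restrictScalars ℝ)
    rw [wdzb_mul hu hv, wdzb_holo hdξd,
      (wd_comp ((hξdiff z hz).hasDerivAt) hwdzg).2]
    ring
  -- Step B : the composed function equals F
  have hstepB : wdzb (wdz (fun w => g (ξ w))) z = wdzb (wdz ψc) z := by
    have hFE : (fun w => g (ξ w)) =ᶠ[nhds z]
        (fun w => ψc w - (1/3 : ℂ) * (L w + (starRingEnd ℂ) (L w)) - (1/3 : ℂ) * (Real.log 2 : ℂ)) := by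
      filter_upwards [hΩn] with x hx
      exact hrel x hx
    have h1 : wdz (fun w => g (ξ w)) =ᶠ[nhds z]
        wdz (fun w => ψc w - (1/3 : ℂ) * (L w + (starRingEnd ℂ) (L w)) - (1/3 : ℂ) * (Real.log 2 : ℂ)) :=
      hFE.eventuallyEq_nhds.mono fun x hx => wdz_congr hx
    have h2 : ∀ᶠ x in nhds z,
        wdz (fun w => ψc w - (1/3 : ℂ) * (L w + (starRingEnd ℂ) (L w)) - (1/3 : ℂ) * (Real.log 2 : ℂ)) x
        = wdz ψc x - (1/3 : ℂ) * deriv L x := by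
      filter_upwards [hΩn] with x hx
      have hLd : HasDerivAt L (deriv L x) x := (hL.differentiableAt (hΩ.mem_nhds hx)).hasDerivAt
      have hLr : DifferentiableAt ℝ L x := hLd.differentiableAt.restrictScalars ℝ
      have hLc : DifferentiableAt ℝ (fun w => (starRingEnd ℂ) (L w)) x :=
        Complex.conjCLE.differentiable.differentiableAt.comp x hLr
      have hA : DifferentiableAt ℝ (fun w => (1/3 : ℂ) * (L w + (starRingEnd ℂ) (L w))) x :=
        (hLr.add hLc).const_mul _
      have hψd : DifferentiableAt ℝ ψc x := (hψs x hx).differentiableAt (by simp)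
      rw [wdz_sub (hψd.fun_sub hA) (differentiableAt_const _),
          wdz_sub hψd hA, wdz_const, wdz_const_mul _ (hLr.fun_add hLc),
          wdz_add hLr hLc, wdz_holo hLd, wdz_conj_holo hLd]
      ring
    rw [wdzb_congr (h1.trans h2)]
    have hdLa : AnalyticAt ℂ (deriv L) z := (hL.analyticOnNhd hΩ).deriv z hz
    have hdLd : HasDerivAt (deriv L) (deriv (deriv L) z) z := hdLa.differentiableAt.hasDerivAt
    have hu : DifferentiableAt ℝ (wdz ψc) z :=
      (contDiffAt_wdz (hψs z hz)).differentiableAt (by simp)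
    have hv : DifferentiableAt ℝ (fun x => (1/3 : ℂ) * deriv L x) z :=
      (hdLd.differentiableAt.restrictScalars ℝ).const_mul _
    rw [wdzb_sub hu hv, wdzb_const_mul _ (hdLd.differentiableAt.restrictScalars ℝ),
      wdzb_holo hdLd]
    ring
  -- Step C : algebra
  set K := Complex.exp ((1/3 : ℂ) * (L z + (starRingEnd ℂ) (L z))) with hK
  set M := Complex.exp ((1/3 : ℂ) * ((Real.log 2 : ℝ) : ℂ)) with hM
  have hK0 : K ≠ 0 := Complex.exp_ne_zero _
  have hM0 : M ≠ 0 := Complex.exp_ne_zero _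
  have hM3 : M ^ 3 = 2 := by
    rw [hM, ← Complex.exp_nat_mul,
      show ((3:ℕ):ℂ) * ((1/3 : ℂ) * ((Real.log 2 : ℝ) : ℂ)) = ((Real.log 2 : ℝ) : ℂ) by push_cast; ring,
      ← Complex.ofReal_exp, Real.exp_log two_pos]
    norm_num
  have hK3 : K ^ 3 = U z * (starRingEnd ℂ) (U z) := by
    rw [hK, ← Complex.exp_nat_mul,
      show ((3:ℕ):ℂ) * ((1/3 : ℂ) * (L z + (starRingEnd ℂ) (L z))) = L z + (starRingEnd ℂ) (L z) by push_cast; ring,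
      Complex.exp_add, Complex.exp_conj, hLU z hz]
  have hKreal : K = ((Real.exp ((2/3) * (L z).re) : ℝ) : ℂ) := by
    rw [hK, Complex.ofReal_exp]
    congr 1
    rw [Complex.add_conj]
    push_cast
    ring
  have hKC : K = C z * (starRingEnd ℂ) (C z) := by
    have h1 : (C z * (starRingEnd ℂ) (C z)) ^ 3 = K ^ 3 := by
      rw [hK3, ← hCU z hz, mul_pow, ← map_pow]
    rw [Complex.mul_conj] at h1 ⊢
    rw [hKreal] at h1 ⊢
    have h2 : (Complex.normSq (C z)) ^ 3 = (Real.exp ((2/3) * (L z).re)) ^ 3 := by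
      exact_mod_cast h1
    have h3 : Complex.normSq (C z) = Real.exp ((2/3) * (L z).re) :=
      (pow_left_inj₀ (Complex.normSq_nonneg _) (Real.exp_nonneg _) three_ne_zero).mp h2
    exact_mod_cast congrArg (fun r : ℝ => (r : ℂ)) h3.symm
  have hMc : (starRingEnd ℂ) M = M := by
    rw [hM, ← Complex.exp_conj]
    congr 1
    rw [show ((1:ℂ)/3) * ((Real.log 2:ℝ):ℂ) = (((1/3 * Real.log 2 : ℝ)):ℂ) by push_cast; ring,
      Complex.conj_ofReal]
  have ht : (2:ℂ) ^ (-(1/3 : ℂ)) = M⁻¹ := by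
    rw [hM, ← Complex.exp_neg,
      show (2:ℂ) = ((2:ℝ):ℂ) by norm_num,
      Complex.cpow_def_of_ne_zero (by norm_num),
      ← Complex.ofReal_log (by norm_num : (0:ℝ) ≤ 2)]
    congr 1
    ring
  have hcc : deriv ξ z * (starRingEnd ℂ) (deriv ξ z) = K / M^2 := by
    rw [hξ' z hz, ht, map_mul, map_inv₀, hMc, hKC]
    field_simp
  have hrelz := hrel z hz
  have hexp1 : Complex.exp ((ψh (ξ z) : ℝ) : ℂ) = Complex.exp ((ψ z : ℝ) : ℂ) / (K * M) := by
    rw [hrelz, sub_sub, Complex.exp_sub, Complex.exp_add, hK, hM]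
  have hexp2 : Complex.exp (-2 * ((ψh (ξ z) : ℝ) : ℂ))
      = Complex.exp (-2 * ((ψ z : ℝ) : ℂ)) * K^2 * M^2 := by
    rw [hrelz,
      show (-2:ℂ) * (((ψ z : ℝ):ℂ) - (1/3) * (L z + (starRingEnd ℂ) (L z)) - (1/3) * ((Real.log 2 : ℝ):ℂ))
        = (-2 * ((ψ z : ℝ):ℂ)) + ((2:ℕ) * ((1/3 : ℂ) * (L z + (starRingEnd ℂ) (L z))))
          + ((2:ℕ) * ((1/3 : ℂ) * ((Real.log 2 : ℝ):ℂ))) by push_cast; ring,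
      Complex.exp_add, Complex.exp_add, Complex.exp_nat_mul, Complex.exp_nat_mul, ← hK, ← hM]
  have h5 : wdzb (wdz ψc) z = K / M^2 * wdzb (wdz g) (ξ z) := by
    rw [← hstepB, hstepA, hcc]
  have hP := hpde z hz
  have habs : ((‖U z‖ : ℝ) : ℂ) ^ 2 = K ^ 3 := by
    rw [hK3, Complex.mul_conj]
    norm_cast
    exact (Complex.normSq_eq_norm_sq _).symm
  rw [habs] at hP
  rw [hexp1, hexp2]
  set W := wdzb (wdz g) (ξ z)
  set P := wdzb (wdz ψc) z
  set E1 := Complex.exp ((ψ z : ℝ) : ℂ)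
  set E2 := Complex.exp (-2 * ((ψ z : ℝ) : ℂ))
  have hW : W = P * M^2 / K := by
    rw [h5]
    field_simp
  have hPval : P = -(1/2 * E1) - K^3 * E2 := by linear_combination hP
  rw [hW, hPval]
  field_simp
  linear_combination (-E1) * hM3
end

section
/- With P, Q, A_z, A_{z̃} as in the Tzitzéica ansatz (P_{13}=1, Q_{31}=e^u, A_z lower-triangular with diagonal (u_z, −u_z, 0) and subdiagonal entries 1, A_{z̃} upper-triangular with (A_{z̃})_{12}=e^{−2u}, (A_{z̃})_{23}=e^u), the gauge-invariant conditions hold: Tr(PQ) = e^u ≠ 0, Tr((D_zP)²) = 0, Tr((D_{z̃}Q)²) = 0, Tr((D_zP)²(D_{z̃}Q)²) ≠ 0, and Tr((PQ)⁴ + (PQ)²(D_zP)(D_{z̃}Q) − PQ(D_zP)QP(D_{z̃}Q)) = 0, provided u satisfies u_{zz̃} = e^u − e^{−2u}. -/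
/-! The trace conditions are pure matrix algebra: `D_zP` is strictly upper and `D_{z̃}Q` strictly
lower triangular, so their squares are traceless, and in the quartic trace the two terms
involving `u_z` and `∂_{z̃}e^u` cancel, leaving `e^{4u} - e^{2u}·e^{2u} = 0`. -/

noncomputable def pdz (f : ℂ × ℂ → ℂ) (p : ℂ × ℂ) : ℂ :=
  deriv (fun t => f (t, p.2)) p.1

noncomputable def pdzt (f : ℂ × ℂ → ℂ) (p : ℂ × ℂ) : ℂ :=
  deriv (fun t => f (p.1, t)) p.2

noncomputable def pdzM (M : ℂ × ℂ → Matrix (Fin 3) (Fin 3) ℂ) (p : ℂ × ℂ) :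
    Matrix (Fin 3) (Fin 3) ℂ :=
  Matrix.of fun i j => pdz (fun q => M q i j) p

noncomputable def pdztM (M : ℂ × ℂ → Matrix (Fin 3) (Fin 3) ℂ) (p : ℂ × ℂ) :
    Matrix (Fin 3) (Fin 3) ℂ :=
  Matrix.of fun i j => pdzt (fun q => M q i j) p

open Matrix

section MatrixAlgebra

variable {R : Type*} [CommRing R]

theorem trace_sq_strictUpper_fin_three (a b c : R) :
    ((!![0, a, b; 0, 0, c; 0, 0, 0] : Matrix (Fin 3) (Fin 3) R) ^ 2).trace = 0 := by
  simp [sq, trace_fin_three]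

theorem trace_sq_strictLower_fin_three (x y z : R) :
    ((!![0, 0, 0; x, 0, 0; y, z, 0] : Matrix (Fin 3) (Fin 3) R) ^ 2).trace = 0 := by
  simp [sq, trace_fin_three]

theorem trace_sq_strictUpper_mul_sq_strictLower_fin_three (a b c x y z : R) :
    ((!![0, a, b; 0, 0, c; 0, 0, 0] : Matrix (Fin 3) (Fin 3) R) ^ 2 *
      (!![0, 0, 0; x, 0, 0; y, z, 0] : Matrix (Fin 3) (Fin 3) R) ^ 2).trace = a * c * (z * x) := by
  simp [sq, trace_fin_three]

theorem trace_tzitzeica_quartic (e a b c x y z : R) :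
    let P : Matrix (Fin 3) (Fin 3) R := !![0, 0, 1; 0, 0, 0; 0, 0, 0]
    let Q : Matrix (Fin 3) (Fin 3) R := !![0, 0, 0; 0, 0, 0; e, 0, 0]
    let D : Matrix (Fin 3) (Fin 3) R := !![0, a, b; 0, 0, c; 0, 0, 0]
    let E : Matrix (Fin 3) (Fin 3) R := !![0, 0, 0; x, 0, 0; y, z, 0]
    ((P * Q) ^ 4 + (P * Q) ^ 2 * D * E - P * Q * D * (Q * P) * E).trace
      = e ^ 4 + e ^ 2 * a * x := by
  simp [pow_succ, trace_fin_three]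
  ring

end MatrixAlgebra

theorem pdzM_const (M : Matrix (Fin 3) (Fin 3) ℂ) (p : ℂ × ℂ) :
    pdzM (fun _ => M) p = 0 := by
  ext i j
  exact deriv_const _ _

theorem pdztM_single_two_zero (f : ℂ × ℂ → ℂ) (p : ℂ × ℂ) :
    pdztM (fun q => !![0, 0, 0; 0, 0, 0; f q, 0, 0]) p = !![0, 0, 0; 0, 0, 0; pdzt f p, 0, 0] := by
  ext i j
  fin_cases i <;> fin_cases j <;> simp [pdztM, pdzt]

theorem stmt10_general (u : ℂ × ℂ → ℂ)
    (P Q Az Azt DzP DztQ : ℂ × ℂ → Matrix (Fin 3) (Fin 3) ℂ)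
    (hP : ∀ p, P p = !![0, 0, 1; 0, 0, 0; 0, 0, 0])
    (hQ : ∀ p, Q p = !![0, 0, 0; 0, 0, 0; Complex.exp (u p), 0, 0])
    (hAz : ∀ p, Az p = !![pdz u p, 0, 0; 1, -(pdz u p), 0; 0, 1, 0])
    (hAzt : ∀ p, Azt p =
      !![0, Complex.exp (-2 * u p), 0; 0, 0, Complex.exp (u p); 0, 0, 0])
    (hDzP : ∀ p, DzP p = pdzM P p + (Az p * P p - P p * Az p))
    (hDztQ : ∀ p, DztQ p = pdztM Q p + (Azt p * Q p - Q p * Azt p)) :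
    ∀ p, (P p * Q p).trace = Complex.exp (u p) ∧ Complex.exp (u p) ≠ 0 ∧
      ((DzP p) ^ 2).trace = 0 ∧ ((DztQ p) ^ 2).trace = 0 ∧
      ((DzP p) ^ 2 * (DztQ p) ^ 2).trace ≠ 0 ∧
      ((P p * Q p) ^ 4 + (P p * Q p) ^ 2 * DzP p * DztQ p
        - P p * Q p * DzP p * (Q p * P p) * DztQ p).trace = 0 := by
  intro p
  set e := Complex.exp (u p)
  have hDzP' : DzP p = !![0, -1, pdz u p; 0, 0, 1; 0, 0, 0] := by
    rw [hDzP, funext hP, pdzM_const, hAz]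
    simp
  have hDztQ' : DztQ p = !![0, 0, 0; e * e, 0, 0;
      pdzt (fun q => Complex.exp (u q)) p, -(e * Complex.exp (-2 * u p)), 0] := by
    rw [hDztQ, funext hQ, pdztM_single_two_zero, hAzt]
    simp [e]
  refine ⟨by simp [hP, hQ, trace_fin_three, e], Complex.exp_ne_zero _, ?_, ?_, ?_, ?_⟩
  · rw [hDzP']
    exact trace_sq_strictUpper_fin_three _ _ _
  · rw [hDztQ']
    exact trace_sq_strictLower_fin_three _ _ _
  · rw [hDzP', hDztQ', trace_sq_strictUpper_mul_sq_strictLower_fin_three]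
    simp [e, Complex.exp_ne_zero]
  · rw [hP, hQ, hDzP', hDztQ', trace_tzitzeica_quartic]
    ring

/-- For the Tzitzéica ansatz, provided `u_{zz̃} = e^u − e^{−2u}`,
the gauge-invariant conditions hold: `Tr(PQ) = e^u ≠ 0`, `Tr((D_zP)²) = 0`,
`Tr((D_{z̃}Q)²) = 0`, `Tr((D_zP)²(D_{z̃}Q)²) ≠ 0`, and
`Tr((PQ)⁴ + (PQ)²(D_zP)(D_{z̃}Q) − PQ(D_zP)QP(D_{z̃}Q)) = 0`. -/
theorem stmt10 (u : ℂ × ℂ → ℂ) (hu : Differentiable ℂ u)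
    (P Q Az Azt DzP DztQ : ℂ × ℂ → Matrix (Fin 3) (Fin 3) ℂ)
    (hP : ∀ p, P p = !![0, 0, 1; 0, 0, 0; 0, 0, 0])
    (hQ : ∀ p, Q p = !![0, 0, 0; 0, 0, 0; Complex.exp (u p), 0, 0])
    (hAz : ∀ p, Az p = !![pdz u p, 0, 0; 1, -(pdz u p), 0; 0, 1, 0])
    (hAzt : ∀ p, Azt p =
      !![0, Complex.exp (-2 * u p), 0; 0, 0, Complex.exp (u p); 0, 0, 0])
    (hDzP : ∀ p, DzP p = pdzM P p + (Az p * P p - P p * Az p))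
    (hDztQ : ∀ p, DztQ p = pdztM Q p + (Azt p * Q p - Q p * Azt p))
    (htz : ∀ p, pdz (pdzt u) p = Complex.exp (u p) - Complex.exp (-2 * u p)) :
    ∀ p, (P p * Q p).trace = Complex.exp (u p) ∧ Complex.exp (u p) ≠ 0 ∧
      ((DzP p) ^ 2).trace = 0 ∧ ((DztQ p) ^ 2).trace = 0 ∧
      ((DzP p) ^ 2 * (DztQ p) ^ 2).trace ≠ 0 ∧
      ((P p * Q p) ^ 4 + (P p * Q p) ^ 2 * DzP p * DztQ p
        - P p * Q p * DzP p * (Q p * P p) * DztQ p).trace = 0 :=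
  stmt10_general u P Q Az Azt DzP DztQ hP hQ hAz hAzt hDzP hDztQ
end
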